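/- Let G ≤ Isom(ℝ²) be the subgroup generated by the isometries c(v) = R_{π/2} v and d(v) = R_{π} v + (1,0). Then the set of translations contained in G (elements whose linear part is the identity) is exactly the subgroup generated by the translations t₁ = τ_{(1,0)} and t₂ = τ_{(0,1)}. -/

import Mathlib

/-!
Every element of `G = ⟨c, d⟩` maps the integer lattice `ℤ²` onto itself, because `c` and `d` do.
Hence a translation `v ↦ v + w` in `G` has `w = g 0 ∈ ℤ²`, so it is `t₁ ^ m * t₂ ^ n`.
Conversely `t₁ = d c²` and `t₂ = c⁻¹ t₁ c` lie in `G`.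
-/

open Real

/-- The Euclidean plane `E²`. -/
abbrev E2 : Type := EuclideanSpace ℝ (Fin 2)

/-- The vector `(x, y)` of the Euclidean plane. -/
def vecE (x y : ℝ) : E2 := WithLp.toLp 2 ![x, y]

/-- Rotation of the Euclidean plane:
`R_θ(x,y) = (x cos θ + y sin θ, −x sin θ + y cos θ)`. -/
noncomputable def rotE (θ : ℝ) (v : E2) : E2 :=
  vecE (v 0 * Real.cos θ + v 1 * Real.sin θ) (-v 0 * Real.sin θ + v 1 * Real.cos θ)

namespace IsometryEquiv

variable {α : Type*} [PseudoEMetricSpace α]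

def setStabilizer (S : Set α) : Subgroup (α ≃ᵢ α) where
  carrier := {g | ∀ x, g x ∈ S ↔ x ∈ S}
  one_mem' _ := Iff.rfl
  mul_mem' ha hb x := (ha _).trans (hb x)
  inv_mem' {g} hg x := by rw [← hg, apply_inv_self]

theorem mem_setStabilizer {S : Set α} {g : α ≃ᵢ α} :
    g ∈ setStabilizer S ↔ ∀ x, g x ∈ S ↔ x ∈ S :=
  Iff.rfl

variable {E : Type*} [SeminormedAddCommGroup E]

def translationHom : Multiplicative E →* (E ≃ᵢ E) where
  toFun w := addRight w.toAdd
  map_one' := ext fun v => add_zero v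
  map_mul' a b := ext fun v => by
    simp only [toAdd_mul, addRight_apply, mul_apply]
    abel

theorem translationHom_ofAdd_eq {g : E ≃ᵢ E} {w : E} (h : ∀ v, g v = v + w) :
    translationHom (Multiplicative.ofAdd w) = g :=
  ext fun v => (h v).symm

theorem mem_range_translationHom {g : E ≃ᵢ E} :
    g ∈ translationHom.range ↔ ∃ w, ∀ v, g v = v + w :=
  ⟨fun ⟨w, hw⟩ => ⟨w.toAdd, fun v => by rw [← hw]; rfl⟩,
    fun ⟨_, hw⟩ => ⟨_, translationHom_ofAdd_eq hw⟩⟩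

theorem closure_pair_le_inf_range_translationHom {H : Subgroup (E ≃ᵢ E)} {t₁ t₂ : E ≃ᵢ E}
    {w₁ w₂ : E} (ht₁ : ∀ v, t₁ v = v + w₁) (ht₂ : ∀ v, t₂ v = v + w₂) (h₁ : t₁ ∈ H)
    (h₂ : t₂ ∈ H) : Subgroup.closure {t₁, t₂} ≤ H ⊓ translationHom.range := by
  rw [Subgroup.closure_le, Set.insert_subset_iff, Set.singleton_subset_iff]
  exact ⟨⟨h₁, mem_range_translationHom.2 ⟨_, ht₁⟩⟩, ⟨h₂, mem_range_translationHom.2 ⟨_, ht₂⟩⟩⟩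

end IsometryEquiv

open IsometryEquiv

theorem E2.ext {v w : E2} (h₀ : v 0 = w 0) (h₁ : v 1 = w 1) : v = w := by
  ext i
  fin_cases i
  exacts [h₀, h₁]

@[simp] theorem vecE_apply_zero (x y : ℝ) : vecE x y 0 = x := rfl

@[simp] theorem vecE_apply_one (x y : ℝ) : vecE x y 1 = y := rfl

theorem rotE_pi_div_two (v : E2) : rotE (π / 2) v = vecE (v 1) (-v 0) := by
  simp [rotE]

theorem rotE_pi (v : E2) : rotE π v = vecE (-v 0) (-v 1) := by
  simp [rotE]

def intLattice : Set E2 :=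
  {v | v 0 ∈ AddSubgroup.zmultiples 1 ∧ v 1 ∈ AddSubgroup.zmultiples 1}

theorem zero_mem_intLattice : (0 : E2) ∈ intLattice :=
  ⟨zero_mem _, zero_mem _⟩

theorem exists_eq_zsmul_add_zsmul_of_mem_intLattice {w : E2} (hw : w ∈ intLattice) :
    ∃ m n : ℤ, w = m • vecE 1 0 + n • vecE 0 1 := by
  obtain ⟨⟨m, hm⟩, ⟨n, hn⟩⟩ := hw
  refine ⟨m, n, E2.ext ?_ ?_⟩ <;> simp_all

theorem mem_setStabilizer_intLattice_of_apply_eq_vecE {g : E2 ≃ᵢ E2}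
    (hg : ∀ v, g v = vecE (v 1) (-v 0)) : g ∈ setStabilizer intLattice :=
  mem_setStabilizer.2 fun v => by simp [intLattice, hg, neg_mem_iff, and_comm]

theorem mem_setStabilizer_intLattice_of_apply_eq_vecE_neg_add_one {g : E2 ≃ᵢ E2}
    (hg : ∀ v, g v = vecE (-v 0 + 1) (-v 1)) : g ∈ setStabilizer intLattice :=
  mem_setStabilizer.2 fun v => by
    simp [intLattice, hg, neg_mem_iff, add_mem_cancel_right (AddSubgroup.mem_zmultiples (1 : ℝ))]

theorem setStabilizer_intLattice_inf_range_translationHom_le {t₁ t₂ : E2 ≃ᵢ E2}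
    (ht₁ : ∀ v, t₁ v = v + vecE 1 0) (ht₂ : ∀ v, t₂ v = v + vecE 0 1) :
    setStabilizer intLattice ⊓ translationHom.range ≤ Subgroup.closure {t₁, t₂} := by
  rintro _ ⟨hg, w, rfl⟩
  obtain ⟨m, n, hw⟩ := exists_eq_zsmul_add_zsmul_of_mem_intLattice
    (by simpa [translationHom] using (mem_setStabilizer.1 hg 0).2 zero_mem_intLattice)
  rw [← ofAdd_toAdd w, hw, ofAdd_add, ofAdd_zsmul, ofAdd_zsmul, map_mul, map_zpow, map_zpow,
    translationHom_ofAdd_eq ht₁, translationHom_ofAdd_eq ht₂]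
  exact mul_mem (zpow_mem (Subgroup.subset_closure (by simp)) m)
    (zpow_mem (Subgroup.subset_closure (by simp)) n)

/-- For `c(v) = R_{π/2} v` and `d(v) = R_π v + (1,0)` in `Isom(E²)`, the set of
translations (elements whose linear part is the identity, i.e. of the form
`v ↦ v + w`) contained in the subgroup `G = ⟨c, d⟩` is exactly the subgroup generated
by the translations `t₁ = τ_{(1,0)}` and `t₂ = τ_{(0,1)}`. -/
theorem stmt8 (c d t₁ t₂ : E2 ≃ᵢ E2)
    (hc : ∀ v : E2, c v = rotE (π / 2) v)
    (hd : ∀ v : E2, d v = rotE π v + vecE 1 0)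
    (ht₁ : ∀ v : E2, t₁ v = v + vecE 1 0)
    (ht₂ : ∀ v : E2, t₂ v = v + vecE 0 1) :
    {g : E2 ≃ᵢ E2 | g ∈ Subgroup.closure {c, d} ∧ ∃ w : E2, ∀ v : E2, g v = v + w}
      = (Subgroup.closure {t₁, t₂} : Set (E2 ≃ᵢ E2)) := by
  have hc' (v : E2) : c v = vecE (v 1) (-v 0) := by rw [hc, rotE_pi_div_two]
  have hd' (v : E2) : d v = vecE (-v 0 + 1) (-v 1) := by
    rw [hd, rotE_pi]
    exact E2.ext (by simp) (by simp)
  have hc_mem : c ∈ Subgroup.closure {c, d} := Subgroup.subset_closure (by simp)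
  have hd_mem : d ∈ Subgroup.closure {c, d} := Subgroup.subset_closure (by simp)
  have ht₁_mem : t₁ ∈ Subgroup.closure {c, d} := by
    have ht₁_eq : t₁ = d * c * c :=
      ext fun v => E2.ext (by simp [ht₁, hd', hc']) (by simp [ht₁, hd', hc'])
    rw [ht₁_eq]
    exact mul_mem (mul_mem hd_mem hc_mem) hc_mem
  have ht₂_mem : t₂ ∈ Subgroup.closure {c, d} := by
    have ht₂_eq : t₂ = c⁻¹ * (t₁ * c) := eq_inv_mul_of_mul_eq <|
      ext fun v => E2.ext (by simp [ht₁, ht₂, hc']) (by simp [ht₁, ht₂, hc'])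
    rw [ht₂_eq]
    exact mul_mem (inv_mem hc_mem) (mul_mem ht₁_mem hc_mem)
  have hG : Subgroup.closure {c, d} ≤ setStabilizer intLattice := by
    rw [Subgroup.closure_le, Set.insert_subset_iff, Set.singleton_subset_iff]
    exact ⟨mem_setStabilizer_intLattice_of_apply_eq_vecE hc',
      mem_setStabilizer_intLattice_of_apply_eq_vecE_neg_add_one hd'⟩
  suffices Subgroup.closure {c, d} ⊓ translationHom.range = Subgroup.closure {t₁, t₂} by
    rw [← this]
    ext g
    simp only [Set.mem_ofPred_eq, SetLike.mem_coe, Subgroup.mem_inf, mem_range_translationHom]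
  exact le_antisymm
    ((inf_le_inf_right _ hG).trans (setStabilizer_intLattice_inf_range_translationHom_le ht₁ ht₂))
    (closure_pair_le_inf_range_translationHom ht₁ ht₂ ht₁_mem ht₂_mem)
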